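/- arXiv:1912.10926 — 5 statements merged into one kernel-verified Lean document; each statement's English description precedes it below -/
import Mathlib

section
/- For any symplectic matrix H ∈ ℝ^{2d×2d}, there exists a symmetric matrix S ∈ ℝ^{d×d} such that H = [[I, S], [0, I]] · G where G is a symplectic matrix whose upper-left d×d block is invertible. -/
open Matrix Polynomial

def Jmat (d : ℕ) : Matrix (Fin d ⊕ Fin d) (Fin d ⊕ Fin d) ℝ :=
  Matrix.fromBlocks 0 1 (-1) 0

def IsSymplectic {d : ℕ} (H : Matrix (Fin d ⊕ Fin d) (Fin d ⊕ Fin d) ℝ) : Prop :=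
  Hᵀ * Jmat d * H = Jmat d

lemma shear_symplectic {d : ℕ} (S : Matrix (Fin d) (Fin d) ℝ) (hS : Sᵀ = S) :
    IsSymplectic (Matrix.fromBlocks 1 S 0 1) := by
  unfold IsSymplectic Jmat
  rw [Matrix.fromBlocks_transpose]
  simp [Matrix.fromBlocks_multiply, hS]

lemma symplectic_det_ne {d : ℕ} (H : Matrix (Fin d ⊕ Fin d) (Fin d ⊕ Fin d) ℝ)
    (h : IsSymplectic H) : H.det ≠ 0 := by
  have hJJ : Jmat d * Jmat d = -1 := by
    unfold Jmat
    rw [show (-1 : Matrix (Fin d ⊕ Fin d) (Fin d ⊕ Fin d) ℝ) = Matrix.fromBlocks (-1) 0 0 (-1) by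
      rw [← Matrix.fromBlocks_one (l := Fin d) (m := Fin d) (α := ℝ), Matrix.fromBlocks_neg]; simp]
    simp [Matrix.fromBlocks_multiply]
  have hJ : (Jmat d).det ≠ 0 := by
    intro h0
    have := congrArg Matrix.det hJJ
    rw [Matrix.det_mul, h0, mul_zero] at this
    have h1 : ((-1 : Matrix (Fin d ⊕ Fin d) (Fin d ⊕ Fin d) ℝ)).det = 1 := by
      have : ((-1 : Matrix (Fin d ⊕ Fin d) (Fin d ⊕ Fin d) ℝ)) = (-1 : ℝ) • 1 := by
        simp
      rw [this, Matrix.det_smul, Matrix.det_one, mul_one]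
      rw [Fintype.card_sum, Fintype.card_fin]
      exact Even.neg_one_pow ⟨d, rfl⟩
    rw [h1] at this
    exact one_ne_zero this.symm
  intro h0
  have := congrArg Matrix.det h
  rw [Matrix.det_mul, Matrix.det_mul, Matrix.det_transpose, h0] at this
  simp at this
  exact hJ this.symm


lemma dp_helper {d : ℕ} (M N : Matrix (Fin d) (Fin d) ℝ) (x y : Fin d → ℝ) :
    (M.mulVec x) ⬝ᵥ (N.mulVec y) = x ⬝ᵥ ((Mᵀ * N).mulVec y) := by
  rw [← Matrix.mulVec_mulVec, Matrix.dotProduct_mulVec x, Matrix.vecMul_transpose]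

lemma exists_t {d : ℕ} (A C : Matrix (Fin d) (Fin d) ℝ) (hsym : Aᵀ * C = Cᵀ * A)
    (hinj : ∀ v : Fin d → ℝ, A.mulVec v = 0 → C.mulVec v = 0 → v = 0) :
    ∃ t : ℝ, (A + t • C).det ≠ 0 := by
  set Az : Matrix (Fin d) (Fin d) ℂ := A.map (Complex.ofReal) with hAz
  set Cz : Matrix (Fin d) (Fin d) ℂ := C.map (Complex.ofReal) with hCz
  -- step 1: det (Az + I • Cz) ≠ 0
  have hZ : (Az + Complex.I • Cz).det ≠ 0 := by
    intro h0
    obtain ⟨w, hw0, hw⟩ := (Matrix.exists_mulVec_eq_zero_iff).mpr h0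
    set a : Fin d → ℝ := fun j => (w j).re with ha
    set b : Fin d → ℝ := fun j => (w j).im with hb
    have hre : A.mulVec a = C.mulVec b := by
      funext j
      have hj := congrFun hw j
      have := congrArg Complex.re hj
      simp [Matrix.mulVec, dotProduct, Matrix.add_apply, Matrix.smul_apply, hAz, hCz,
        Complex.add_re, Complex.re_sum, Complex.mul_re, ha, hb, Finset.sum_add_distrib,
        sub_eq_iff_eq_add] at this ⊢
      linarith [this]
    have him : A.mulVec b = -(C.mulVec a) := by
      funext j
      have hj := congrFun hw j
      have := congrArg Complex.im hj
      simp [Matrix.mulVec, dotProduct, Matrix.add_apply, Matrix.smul_apply, hAz, hCz,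
        Complex.add_im, Complex.im_sum, Complex.mul_im, ha, hb, Finset.sum_add_distrib] at this ⊢
      linarith [this]
    have key : (A.mulVec a) ⬝ᵥ (A.mulVec a) + (C.mulVec a) ⬝ᵥ (C.mulVec a) = 0 := by
      nth_rewrite 1 [hre]
      nth_rewrite 1 [show C.mulVec a = -(A.mulVec b) by rw [him, neg_neg]]
      rw [dp_helper, neg_dotProduct, dp_helper, hsym]
      ring
    have h1 : (0:ℝ) ≤ (A.mulVec a) ⬝ᵥ (A.mulVec a) :=
      Finset.sum_nonneg fun i _ => mul_self_nonneg _
    have h2 : (0:ℝ) ≤ (C.mulVec a) ⬝ᵥ (C.mulVec a) :=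
      Finset.sum_nonneg fun i _ => mul_self_nonneg _
    have hAa : A.mulVec a = 0 := by
      rw [← dotProduct_self_eq_zero (v := A.mulVec a)]
      linarith
    have hCa : C.mulVec a = 0 := by
      rw [← dotProduct_self_eq_zero (v := C.mulVec a)]
      linarith
    have ha0 : a = 0 := hinj a hAa hCa
    have hb0 : b = 0 := by
      refine hinj b ?_ ?_
      · rw [him, hCa, neg_zero]
      · rw [← hre, hAa]
    apply hw0
    funext j
    have : w j = Complex.ofReal (a j) + Complex.ofReal (b j) * Complex.I := by
      simp [ha, hb, Complex.re_add_im]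
    rw [this, congrFun ha0 j, congrFun hb0 j]
    simp
  -- step 2: polynomial
  set p : Polynomial ℂ :=
    (Matrix.of (fun i j => Polynomial.C (Az i j) + Polynomial.X * Polynomial.C (Cz i j))).det
    with hp
  have heval : ∀ z : ℂ, p.eval z = (Az + z • Cz).det := by
    intro z
    rw [hp, ← Polynomial.coe_evalRingHom, RingHom.map_det]
    congr 1
    ext i j
    simp [Matrix.add_apply, Matrix.smul_apply]
    ring
  have hpne : p ≠ 0 := by
    intro h0
    rw [← heval Complex.I] at hZ
    rw [h0] at hZ
    simp at hZ
  have hfin : {t : ℝ | p.IsRoot (Complex.ofReal t)}.Finite := by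
    have := Polynomial.finite_setOf_isRoot hpne
    exact Set.Finite.preimage (Function.Injective.injOn Complex.ofReal_injective) this
  obtain ⟨t, ht⟩ := (hfin.infinite_compl).nonempty
  refine ⟨t, ?_⟩
  have h1 : (Az + (t:ℂ) • Cz).det ≠ 0 := by
    rw [← heval]
    exact fun h => ht h
  intro h0
  apply h1
  have : (A + t • C).map Complex.ofReal = Az + (t:ℂ) • Cz := by
    ext i j
    simp [Matrix.add_apply, Matrix.smul_apply, hAz, hCz]
  rw [← this, show (A + t • C).map Complex.ofReal = Complex.ofRealHom.mapMatrix (A + t • C) from rfl,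
    ← RingHom.map_det, h0]
  simp

theorem stmt8 (d : ℕ) (H : Matrix (Fin d ⊕ Fin d) (Fin d ⊕ Fin d) ℝ)
    (h : IsSymplectic H) :
    ∃ (S : Matrix (Fin d) (Fin d) ℝ) (G : Matrix (Fin d ⊕ Fin d) (Fin d ⊕ Fin d) ℝ),
      Sᵀ = S ∧ IsSymplectic G ∧ IsUnit (G.toBlocks₁₁) ∧
      H = Matrix.fromBlocks 1 S 0 1 * G := by
  set A := H.toBlocks₁₁ with hA
  set B := H.toBlocks₁₂ with hB
  set C := H.toBlocks₂₁ with hC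
  set D := H.toBlocks₂₂ with hD
  have hHB : H = Matrix.fromBlocks A B C D := (Matrix.fromBlocks_toBlocks H).symm
  -- symmetry relation
  have hsym : Aᵀ * C = Cᵀ * A := by
    have h2 := h
    unfold IsSymplectic Jmat at h2
    rw [hHB, Matrix.fromBlocks_transpose, Matrix.fromBlocks_multiply,
      Matrix.fromBlocks_multiply] at h2
    have := congrArg Matrix.toBlocks₁₁ h2
    simp [Matrix.toBlocks_fromBlocks₁₁] at this
    exact (neg_add_eq_zero.mp this).symm
  -- joint injectivity
  have hinj : ∀ v : Fin d → ℝ, A.mulVec v = 0 → C.mulVec v = 0 → v = 0 := by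
    intro v hAv hCv
    have hdet := symplectic_det_ne H h
    have hU : IsUnit H := by
      rw [Matrix.isUnit_iff_isUnit_det]
      exact isUnit_iff_ne_zero.mpr hdet
    have hHinj : Function.Injective H.mulVec := by
      exact Matrix.mulVec_injective_iff_isUnit.mpr hU
    have h0 : H.mulVec (Sum.elim v 0) = 0 := by
      rw [hHB, Matrix.fromBlocks_mulVec]
      simp [hAv, hCv]
    have h1 := hHinj (by rw [h0, Matrix.mulVec_zero] : H.mulVec (Sum.elim v 0) = H.mulVec 0)
    funext i
    simpa using congrFun h1 (Sum.inl i)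
  obtain ⟨t, ht⟩ := exists_t A C hsym hinj
  refine ⟨(-t) • 1, Matrix.fromBlocks 1 (t • (1 : Matrix (Fin d) (Fin d) ℝ)) 0 1 * H,
    ?_, ?_, ?_, ?_⟩
  · simp
  · have hM := shear_symplectic (t • (1 : Matrix (Fin d) (Fin d) ℝ)) (by simp)
    unfold IsSymplectic at hM h ⊢
    rw [Matrix.transpose_mul]
    calc Hᵀ * (Matrix.fromBlocks 1 (t • (1 : Matrix (Fin d) (Fin d) ℝ)) 0 1)ᵀ * Jmat d *
          (Matrix.fromBlocks 1 (t • (1 : Matrix (Fin d) (Fin d) ℝ)) 0 1 * H)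
        = Hᵀ * ((Matrix.fromBlocks 1 (t • (1 : Matrix (Fin d) (Fin d) ℝ)) 0 1)ᵀ * Jmat d *
          Matrix.fromBlocks 1 (t • (1 : Matrix (Fin d) (Fin d) ℝ)) 0 1) * H := by
          simp only [Matrix.mul_assoc]
      _ = Hᵀ * Jmat d * H := by rw [hM]
      _ = Jmat d := h
  · rw [hHB, Matrix.fromBlocks_multiply, Matrix.toBlocks_fromBlocks₁₁]
    have he : (1 : Matrix (Fin d) (Fin d) ℝ) * A + (t • (1 : Matrix (Fin d) (Fin d) ℝ)) * C
        = A + t • C := by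
      rw [Matrix.one_mul, Matrix.smul_mul, Matrix.one_mul]
    rw [he, Matrix.isUnit_iff_isUnit_det]
    exact isUnit_iff_ne_zero.mpr ht
  · rw [← Matrix.mul_assoc, Matrix.fromBlocks_multiply]
    have : (1 : Matrix (Fin d) (Fin d) ℝ) * (t • (1 : Matrix (Fin d) (Fin d) ℝ))
        + ((-t) • (1 : Matrix (Fin d) (Fin d) ℝ)) * 1 = 0 := by
      simp
    rw [show ∀ (X : Matrix (Fin d) (Fin d) ℝ), Matrix.fromBlocks
      ((1:Matrix (Fin d) (Fin d) ℝ) * 1 + ((-t) • (1 : Matrix (Fin d) (Fin d) ℝ)) * 0) X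
      ((0:Matrix (Fin d) (Fin d) ℝ) * 1 + 1 * 0) (0 * (t • (1 : Matrix (Fin d) (Fin d) ℝ)) + 1 * 1)
      = Matrix.fromBlocks 1 X 0 1 from fun X => by simp]
    rw [this, Matrix.fromBlocks_one, Matrix.one_mul]
end

section
/- For any symplectic matrix H ∈ ℝ^{2d×2d}, there exist symmetric matrices S, T, U ∈ ℝ^{d×d} and an invertible P ∈ ℝ^{d×d} such that H = [[I,S],[0,I]] · [[I,0],[T,I]] · [[I,U],[0,I]] · [[P,0],[0,P^{-T}]]. -/
/-!
Shearing `H = [[A, B], [C, D]]` on the left by `[[I, t I], [0, I]]` replaces `A` by `A + t C`.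
Since `Aᵀ C` is symmetric, `(A + i C)ᴴ (A + i C) = Aᵀ A + Cᵀ C`, which is positive definite
because `H` is invertible; so the real polynomial `det (A + X C)` does not vanish at `i`, has
finitely many roots, and `A + t C` is invertible for some real `t`.
A symplectic matrix with invertible upper-left block `P`, multiplied on the right by
`diag (P⁻¹, Pᵀ)`, becomes a symplectic `[[I, U], [T, D]]`; the symplectic relations force `T` and
`U` to be symmetric and `D = T U + I`, i.e. it is `[[I, 0], [T, I]] * [[I, U], [0, I]]`.
-/

open Matrix

open Polynomial

section Pencil

variable {n : Type*} [Fintype n]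

theorem posDef_transpose_mul_add_transpose_mul {A C : Matrix n n ℝ}
    (hker : ∀ x, A *ᵥ x = 0 → C *ᵥ x = 0 → x = 0) : (Aᵀ * A + Cᵀ * C).PosDef := by
  have hinj : Function.Injective (fromRows A C).mulVec := fun x y hxy => by
    rw [fromRows_mulVec, fromRows_mulVec, Sum.elim_eq_iff] at hxy
    simpa [sub_eq_zero, mulVec_sub] using hker (x - y) (by simp [mulVec_sub, hxy.1])
      (by simp [mulVec_sub, hxy.2])
  have := PosDef.conjTranspose_mul_self _ hinj
  rwa [conjTranspose_eq_transpose_of_trivial, transpose_fromRows, fromCols_mul_fromRows] at this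

theorem det_map_add_I_smul_ne_zero [DecidableEq n] {A C : Matrix n n ℝ}
    (hsymm : Aᵀ * C = Cᵀ * A) (hker : ∀ x, A *ᵥ x = 0 → C *ᵥ x = 0 → x = 0) :
    (A.map (algebraMap ℝ ℂ) + Complex.I • C.map (algebraMap ℝ ℂ)).det ≠ 0 := by
  set M := A.map (algebraMap ℝ ℂ) + Complex.I • C.map (algebraMap ℝ ℂ)
  have hMM : Mᴴ * M = (Aᵀ * A + Cᵀ * C).map (algebraMap ℝ ℂ) := by
    have hT (N : Matrix n n ℝ) : (N.map (algebraMap ℝ ℂ))ᴴ = Nᵀ.map (algebraMap ℝ ℂ) := by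
      ext i j; simp
    have hMstar : Mᴴ = Aᵀ.map (algebraMap ℝ ℂ) - Complex.I • Cᵀ.map (algebraMap ℝ ℂ) := by
      simp only [M, conjTranspose_add, conjTranspose_smul, hT, Complex.star_def, Complex.conj_I,
        neg_smul, sub_eq_add_neg]
    rw [hMstar]
    simp only [M, sub_mul, mul_add, Matrix.smul_mul, Matrix.mul_smul, smul_smul, ← Matrix.map_mul,
      hsymm, Complex.I_mul_I, Matrix.map_add _ (map_add _)]
    module
  have hG := (posDef_transpose_mul_add_transpose_mul hker).isUnit
  intro hM
  have := congrArg det hMM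
  rw [det_mul, hM, mul_zero, ← RingHom.mapMatrix_apply, ← RingHom.map_det] at this
  exact ((isUnit_iff_isUnit_det _).1 hG).ne_zero (by simpa using this.symm)

theorem aeval_det_add_X_smul [DecidableEq n] {R S : Type*} [CommRing R] [CommRing S]
    [Algebra R S] (A C : Matrix n n R) (z : S) :
    aeval z (A.map Polynomial.C + (X : R[X]) • C.map Polynomial.C).det =
      (A.map (algebraMap R S) + z • C.map (algebraMap R S)).det := by
  rw [← AlgHom.coe_toRingHom, RingHom.map_det]
  congr 1
  ext i j
  simp [Algebra.commutes]

theorem exists_isUnit_add_smul [DecidableEq n] {A C : Matrix n n ℝ} (hsymm : Aᵀ * C = Cᵀ * A)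
    (hker : ∀ x, A *ᵥ x = 0 → C *ᵥ x = 0 → x = 0) : ∃ t : ℝ, IsUnit (A + t • C) := by
  have hp : (A.map Polynomial.C + (X : ℝ[X]) • C.map Polynomial.C).det ≠ 0 := fun h =>
    det_map_add_I_smul_ne_zero hsymm hker <| by rw [← aeval_det_add_X_smul, h, map_zero]
  obtain ⟨t, ht⟩ := Infinite.exists_notMem_finset
    (A.map Polynomial.C + (X : ℝ[X]) • C.map Polynomial.C).det.roots.toFinset
  refine ⟨t, (isUnit_iff_isUnit_det _).2 (isUnit_iff_ne_zero.2 fun h0 => ht ?_)⟩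
  have := aeval_det_add_X_smul A C t
  rw [Multiset.mem_toFinset, mem_roots hp, IsRoot, ← coe_aeval_eq_eval, this]
  simpa using h0

end Pencil

section Symplectic

variable {l R : Type*} [Fintype l] [DecidableEq l] [CommRing R]

theorem eq_zero_of_fromBlocks_mulVec_eq_zero {A B C D : Matrix l l R}
    (hM : IsUnit (fromBlocks A B C D)) {x : l → R} (hA : A *ᵥ x = 0) (hC : C *ᵥ x = 0) :
    x = 0 := by
  have hx : fromBlocks A B C D *ᵥ (Sum.elim x 0 : l ⊕ l → R) = 0 := by
    simp [fromBlocks_mulVec, hA, hC]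
  have := mulVec_injective_of_isUnit hM (hx.trans (mulVec_zero _).symm)
  simpa using congrArg (· ∘ Sum.inl) this

theorem fromBlocks_one_neg_mul_fromBlocks_one (S : Matrix l l R) :
    fromBlocks 1 (-S) 0 1 * fromBlocks 1 S 0 1 = (1 : Matrix (l ⊕ l) (l ⊕ l) R) := by
  simp [fromBlocks_multiply]

theorem fromBlocks_one_mem_symplecticGroup {S : Matrix l l R} (hS : Sᵀ = S) :
    fromBlocks 1 S 0 1 ∈ symplecticGroup l R :=
  SymplecticGroup.fromBlocks_mem_iff.2 ⟨by simp, by simp [hS], by simp⟩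

theorem fromBlocks_inv_transpose_mem_symplecticGroup {P : Matrix l l R} (hP : IsUnit P) :
    fromBlocks P 0 0 P⁻¹ᵀ ∈ symplecticGroup l R :=
  SymplecticGroup.fromBlocks_mem_iff.2 ⟨by simp, by simp, by
    simp [← transpose_mul, nonsing_inv_mul _ ((isUnit_iff_isUnit_det P).1 hP)]⟩

theorem fromBlocks_one_eq_mul_of_mem_symplecticGroup {T U D : Matrix l l R}
    (h : fromBlocks 1 U T D ∈ symplecticGroup l R) :
    Tᵀ = T ∧ Uᵀ = U ∧ fromBlocks 1 U T D = fromBlocks 1 0 T 1 * fromBlocks 1 U 0 1 := by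
  obtain ⟨hT, hUD, hD⟩ := SymplecticGroup.fromBlocks_mem_iff.1 h
  simp only [transpose_one, Matrix.one_mul, Matrix.mul_one] at hT hD
  replace hT := hT.symm
  have hD' : D = T * U + 1 := by rw [← hD, hT]; abel
  have hU : Uᵀ = U := by
    subst hD'
    simpa [Matrix.mul_add, Matrix.add_mul, transpose_mul, hT, Matrix.mul_assoc] using hUD
  refine ⟨hT, hU, ?_⟩
  simp [fromBlocks_multiply, hD']

theorem exists_fromBlocks_factorization_of_isUnit {P B C D : Matrix l l R}
    (h : fromBlocks P B C D ∈ symplecticGroup l R) (hP : IsUnit P) :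
    ∃ T U : Matrix l l R, Tᵀ = T ∧ Uᵀ = U ∧
      fromBlocks P B C D = fromBlocks 1 0 T 1 * fromBlocks 1 U 0 1 * fromBlocks P 0 0 P⁻¹ᵀ := by
  have hPdet := (isUnit_iff_isUnit_det P).1 hP
  have hPinv : fromBlocks P⁻¹ 0 0 Pᵀ ∈ symplecticGroup l R := by
    simpa [nonsing_inv_nonsing_inv _ hPdet] using
      fromBlocks_inv_transpose_mem_symplecticGroup (isUnit_nonsing_inv_iff.2 hP)
  have hcancel : fromBlocks P⁻¹ 0 0 Pᵀ * fromBlocks P 0 0 P⁻¹ᵀ = 1 := by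
    simp [fromBlocks_multiply, nonsing_inv_mul _ hPdet, ← transpose_mul]
  have hnorm : fromBlocks P B C D * fromBlocks P⁻¹ 0 0 Pᵀ =
      fromBlocks 1 (B * Pᵀ) (C * P⁻¹) (D * Pᵀ) := by
    simp [fromBlocks_multiply, mul_nonsing_inv _ hPdet]
  obtain ⟨hT, hU, hfac⟩ :=
    fromBlocks_one_eq_mul_of_mem_symplecticGroup (hnorm ▸ mul_mem h hPinv)
  refine ⟨_, _, hT, hU, ?_⟩
  rw [← hfac, ← hnorm, Matrix.mul_assoc, hcancel, Matrix.mul_one]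

end Symplectic

theorem IsSymplectic.mem_symplecticGroup {d : ℕ} {H : Matrix (Fin d ⊕ Fin d) (Fin d ⊕ Fin d) ℝ}
    (h : IsSymplectic H) : H ∈ symplecticGroup (Fin d) ℝ := by
  have hJ : Jmat d = -J (Fin d) ℝ := by
    simp [Jmat, J, fromBlocks_neg]
  rw [SymplecticGroup.mem_iff']
  simpa [IsSymplectic, hJ] using h

theorem stmt9 (d : ℕ) (H : Matrix (Fin d ⊕ Fin d) (Fin d ⊕ Fin d) ℝ)
    (h : IsSymplectic H) :
    ∃ S T U P : Matrix (Fin d) (Fin d) ℝ,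
      Sᵀ = S ∧ Tᵀ = T ∧ Uᵀ = U ∧ IsUnit P ∧
      H = Matrix.fromBlocks 1 S 0 1 * Matrix.fromBlocks 1 0 T 1 *
          Matrix.fromBlocks 1 U 0 1 * Matrix.fromBlocks P 0 0 P⁻¹ᵀ := by
  have hH := h.mem_symplecticGroup
  rw [← fromBlocks_toBlocks H] at hH ⊢
  set A := H.toBlocks₁₁
  set B := H.toBlocks₁₂
  set C := H.toBlocks₂₁
  set D := H.toBlocks₂₂
  obtain ⟨t, ht⟩ := exists_isUnit_add_smul (SymplecticGroup.fromBlocks_mem_iff.1 hH).1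
    fun _ => eq_zero_of_fromBlocks_mulVec_eq_zero
      ((isUnit_iff_isUnit_det _).2 (SymplecticGroup.symplectic_det hH))
  have hshear : fromBlocks 1 (t • 1) 0 1 * fromBlocks A B C D =
      fromBlocks (A + t • C) (B + t • D) C D := by
    simp [fromBlocks_multiply]
  obtain ⟨T, U, hT, hU, hfac⟩ := exists_fromBlocks_factorization_of_isUnit
    (hshear ▸ mul_mem (fromBlocks_one_mem_symplecticGroup (by simp)) hH) ht
  refine ⟨-(t • 1), T, U, A + t • C, by simp, hT, hU, ht, ?_⟩
  rw [Matrix.mul_assoc _ (fromBlocks 1 0 T 1), Matrix.mul_assoc, ← hfac, ← hshear,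
    ← Matrix.mul_assoc, fromBlocks_one_neg_mul_fromBlocks_one, Matrix.one_mul]
end

section
/- The set of unit triangular symplectic matrices, i.e., matrices of the form [[I,S],[0,I]] or [[I,0],[S,I]] with S ∈ ℝ^{d×d} symmetric, generates the group of real 2d×2d symplectic matrices. -/
open Matrix

def IsUnitTriangular {d : ℕ} (M : Matrix (Fin d ⊕ Fin d) (Fin d ⊕ Fin d) ℝ) : Prop :=
  ∃ S : Matrix (Fin d) (Fin d) ℝ, Sᵀ = S ∧
    (M = Matrix.fromBlocks 1 S 0 1 ∨ M = Matrix.fromBlocks 1 0 S 1)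

/-!
First make the upper left block of a symplectic `H = [[A, B], [C, D]]` invertible: since `Aᵀ C`
is symmetric and `ker A ∩ ker C = 0`, for the orthogonal projection `S` onto `C (ker A)` the
block `A + S C` of `[[1, S], [0, 1]] * H` is invertible. When `A` is invertible,
`H = [[1, 0], [C A⁻¹, 1]] * diag(A, A⁻ᵀ) * [[1, A⁻¹ B], [0, 1]]`. Finally `diag(A, A⁻ᵀ)` is
multiplicative in `A`, every invertible matrix is a product of invertible symmetric ones
(a transvection is a swap times a symmetric matrix), and for symmetric `M`,
`diag(M, M⁻¹) = [[1, M], [0, 1]] [[1, 0], [-M⁻¹, 1]] [[1, M], [0, 1]] J⁻¹`,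
where `J⁻¹` is the product of the first three factors for `M = -1`.
-/

namespace Matrix

variable {n : Type*} [Fintype n] [DecidableEq n]

section CommRing

variable {R : Type*} [CommRing R]

theorem isSymm_swap_mul_transvection (i j : n) (c : R) :
    ((Equiv.swap i j).permMatrix R * transvection i j c).IsSymm := by
  rw [transvection, Matrix.mul_add, Matrix.mul_one, PEquiv.toMatrix_toPEquiv_mul]
  refine IsSymm.ext fun a b => ?_
  simp only [Matrix.add_apply, submatrix_apply, id, single_apply, PEquiv.toMatrix_apply,
    Equiv.toPEquiv_apply, Option.mem_def, Option.some.injEq, Equiv.swap_apply_def]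
  split_ifs <;> grind

theorem transvection_mem_closure_isSymm {i j : n} (hij : i ≠ j) (c : R) :
    transvection i j c ∈ Submonoid.closure {M : Matrix n n R | M.IsSymm ∧ IsUnit M.det} := by
  set P := (Equiv.swap i j).permMatrix R
  have hPP : P * P = 1 := by simp [P, ← permMatrix_mul]
  have hP : P.IsSymm ∧ IsUnit P.det := ⟨by simp [IsSymm, P, Equiv.swap_inv], by simp [P, hij]⟩
  have hPT : (P * transvection i j c).IsSymm ∧ IsUnit (P * transvection i j c).det :=
    ⟨isSymm_swap_mul_transvection i j c, by simpa [det_transvection_of_ne _ _ hij] using hP.2⟩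
  have : transvection i j c = P * (P * transvection i j c) := by
    rw [← Matrix.mul_assoc, hPP, Matrix.one_mul]
  rw [this]
  exact mul_mem (Submonoid.subset_closure hP) (Submonoid.subset_closure hPT)

noncomputable def diagInvTranspose : Matrix n n R →* Matrix (n ⊕ n) (n ⊕ n) R where
  toFun A := fromBlocks A 0 0 A⁻¹ᵀ
  map_one' := by simp
  map_mul' A B := by simp [fromBlocks_multiply, Matrix.mul_inv_rev]

theorem diagInvTranspose_apply (A : Matrix n n R) :
    diagInvTranspose A = fromBlocks A 0 0 A⁻¹ᵀ := rfl

end CommRing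

theorem mem_closure_isSymm_of_isUnit_det {K : Type*} [Field K] {A : Matrix n n K}
    (hA : IsUnit A.det) :
    A ∈ Submonoid.closure {M : Matrix n n K | M.IsSymm ∧ IsUnit M.det} :=
  diagonal_transvection_induction_of_det_ne_zero _ A hA.ne_zero
    (fun D hD => Submonoid.subset_closure ⟨isSymm_diagonal D, hD.isUnit⟩)
    (fun t => transvection_mem_closure_isSymm t.hij t.c)
    (fun _ _ _ _ => mul_mem)

theorem exists_isSymm_projection (W : Submodule ℝ (n → ℝ)) :
    ∃ P : Matrix n n ℝ, P.IsSymm ∧ (∀ v, P *ᵥ v ∈ W) ∧ ∀ w ∈ W, P *ᵥ w = w := by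
  let K : Submodule ℝ (EuclideanSpace ℝ n) :=
    W.comap (WithLp.linearEquiv 2 ℝ (n → ℝ)).toLinearMap
  let P : Matrix n n ℝ := toEuclideanLin.symm K.starProjection.toLinearMap
  have hP : ∀ v, P *ᵥ v = WithLp.ofLp (K.starProjection (WithLp.toLp 2 v)) := fun v => by
    change WithLp.ofLp (toEuclideanLin P (WithLp.toLp 2 v)) = _
    simp [P]
  refine ⟨P, ?_, fun v => ?_, fun w hw => ?_⟩
  · have : P.IsHermitian := by
      rw [← isSymmetric_toEuclideanLin_iff]
      simpa [P] using K.starProjection_isSymmetric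
    rw [IsSymm, ← conjTranspose_eq_transpose_of_trivial]
    exact this
  · rw [hP]
    exact K.starProjection_apply_mem _
  · rw [hP, K.starProjection_eq_self_iff.2 hw]

theorem exists_isSymm_isUnit_det_add_mul {A C : Matrix n n ℝ} (hAC : Aᵀ * C = Cᵀ * A)
    (hker : ∀ x, A *ᵥ x = 0 → C *ᵥ x = 0 → x = 0) :
    ∃ S : Matrix n n ℝ, S.IsSymm ∧ IsUnit (A + S * C).det := by
  let W := (LinearMap.ker A.mulVecLin).map C.mulVecLin
  obtain ⟨S, hS, hSW, hSid⟩ := exists_isSymm_projection W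
  -- `Aᵀ C` symmetric makes the range of `A` orthogonal to `W`.
  have horth : ∀ x, ∀ w ∈ W, (A *ᵥ x) ⬝ᵥ w = 0 := by
    rintro x _ ⟨y, hy : A *ᵥ y = 0, rfl⟩
    rw [dotProduct_comm, mulVecLin_apply, ← dotProduct_transpose_mulVec, mulVec_mulVec, hAC,
      ← mulVec_mulVec, hy, mulVec_zero, dotProduct_zero]
  refine ⟨S, hS, isUnit_iff_ne_zero.2 fun hdet => ?_⟩
  obtain ⟨v, hv0, hv⟩ := exists_mulVec_eq_zero_iff.2 hdet
  have hAv : A *ᵥ v = -(S *ᵥ (C *ᵥ v)) := by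
    rw [add_mulVec, ← mulVec_mulVec] at hv
    exact eq_neg_of_add_eq_zero_left hv
  have hAv0 : A *ᵥ v = 0 :=
    dotProduct_self_eq_zero.1 (horth v _ (hAv ▸ W.neg_mem (hSW _)))
  have hCv0 : C *ᵥ v = 0 := by
    rw [← hSid (C *ᵥ v) ⟨v, hAv0, rfl⟩, ← neg_eq_zero, ← hAv, hAv0]
  exact hv0 (hker v hAv0 hCv0)

end Matrix

section Symplectic

variable {d : ℕ} {A B C D : Matrix (Fin d) (Fin d) ℝ}
  {G H : Matrix (Fin d ⊕ Fin d) (Fin d ⊕ Fin d) ℝ}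

theorem isSymplectic_fromBlocks_iff :
    IsSymplectic (fromBlocks A B C D) ↔
      Aᵀ * C = Cᵀ * A ∧ Aᵀ * D - Cᵀ * B = 1 ∧ Bᵀ * D = Dᵀ * B := by
  rw [IsSymplectic, Jmat, fromBlocks_transpose, fromBlocks_multiply, fromBlocks_multiply,
    fromBlocks_inj]
  simp only [Matrix.mul_zero, Matrix.mul_one, Matrix.mul_neg, Matrix.neg_mul, zero_add, add_zero,
    neg_add_eq_sub, sub_eq_zero]
  constructor
  · rintro ⟨h₁, h₂, -, h₄⟩
    exact ⟨h₁, h₂, h₄⟩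
  · rintro ⟨h₁, h₂, h₄⟩
    have h₃ : Dᵀ * A - Bᵀ * C = 1 := by simpa using congrArg transpose h₂
    exact ⟨h₁, h₂, by rw [← neg_sub, h₃], h₄⟩

theorem IsSymplectic.mul (hG : IsSymplectic G) (hH : IsSymplectic H) : IsSymplectic (G * H) :=
  calc (G * H)ᵀ * Jmat d * (G * H) = Hᵀ * (Gᵀ * Jmat d * G) * H := by
        simp only [transpose_mul, Matrix.mul_assoc]
    _ = Jmat d := by rw [hG, hH]

theorem isSymplectic_fromBlocks_one_symm_zero_one (hA : A.IsSymm) :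
    IsSymplectic (fromBlocks 1 A 0 1) := by
  simpa [isSymplectic_fromBlocks_iff] using hA.eq

theorem isSymplectic_fromBlocks_one_zero_symm_one (hA : A.IsSymm) :
    IsSymplectic (fromBlocks 1 0 A 1) := by
  simpa [isSymplectic_fromBlocks_iff] using hA.eq.symm

end Symplectic

def unitTriangularSubmonoid (d : ℕ) : Submonoid (Matrix (Fin d ⊕ Fin d) (Fin d ⊕ Fin d) ℝ) :=
  Submonoid.closure {M | IsUnitTriangular M}

namespace unitTriangularSubmonoid

variable {d : ℕ} {A B C D : Matrix (Fin d) (Fin d) ℝ}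

theorem fromBlocks_one_symm_zero_one_mem (hA : A.IsSymm) :
    fromBlocks 1 A 0 1 ∈ unitTriangularSubmonoid d :=
  Submonoid.subset_closure ⟨A, hA, .inl rfl⟩

theorem fromBlocks_one_zero_symm_one_mem (hA : A.IsSymm) :
    fromBlocks 1 0 A 1 ∈ unitTriangularSubmonoid d :=
  Submonoid.subset_closure ⟨A, hA, .inr rfl⟩

theorem fromBlocks_zero_symm_neg_inv_zero_mem (hA : A.IsSymm) (hdet : IsUnit A.det) :
    fromBlocks 0 A (-A⁻¹) 0 ∈ unitTriangularSubmonoid d := by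
  have hinv : (-A⁻¹).IsSymm := by rw [IsSymm, transpose_neg, transpose_nonsing_inv, hA.eq]
  have e : fromBlocks 0 A (-A⁻¹) 0 =
      fromBlocks 1 A 0 1 * fromBlocks 1 0 (-A⁻¹) 1 * fromBlocks 1 A 0 1 := by
    simp [fromBlocks_multiply, mul_nonsing_inv _ hdet, nonsing_inv_mul _ hdet]
  rw [e]
  exact mul_mem (mul_mem (fromBlocks_one_symm_zero_one_mem hA)
    (fromBlocks_one_zero_symm_one_mem hinv)) (fromBlocks_one_symm_zero_one_mem hA)

theorem diagInvTranspose_mem_of_isSymm (hA : A.IsSymm) (hdet : IsUnit A.det) :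
    diagInvTranspose A ∈ unitTriangularSubmonoid d := by
  have hneg : (-1 : Matrix (Fin d) (Fin d) ℝ) * -1 = 1 := by simp
  have hinv : (-1 : Matrix (Fin d) (Fin d) ℝ)⁻¹ = -1 := inv_eq_left_inv hneg
  have e : diagInvTranspose A = fromBlocks 0 A (-A⁻¹) 0 * fromBlocks 0 (-1) (-(-1)⁻¹) 0 := by
    simp [diagInvTranspose_apply, fromBlocks_multiply, hA.eq, transpose_nonsing_inv, hinv]
  rw [e]
  exact mul_mem (fromBlocks_zero_symm_neg_inv_zero_mem hA hdet)
    (fromBlocks_zero_symm_neg_inv_zero_mem (by simp [IsSymm]) (isUnit_det_of_right_inverse hneg))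

theorem diagInvTranspose_mem (hA : IsUnit A.det) :
    diagInvTranspose A ∈ unitTriangularSubmonoid d := by
  have : Submonoid.closure {M : Matrix (Fin d) (Fin d) ℝ | M.IsSymm ∧ IsUnit M.det} ≤
      (unitTriangularSubmonoid d).comap diagInvTranspose :=
    Submonoid.closure_le.2 fun M hM => diagInvTranspose_mem_of_isSymm hM.1 hM.2
  exact this (mem_closure_isSymm_of_isUnit_det hA)

theorem fromBlocks_zero_mem_of_isSymplectic (h : IsSymplectic (fromBlocks A B 0 D)) :
    fromBlocks A B 0 D ∈ unitTriangularSubmonoid d := by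
  obtain ⟨-, hAD, hBD⟩ := isSymplectic_fromBlocks_iff.1 h
  rw [transpose_zero, Matrix.zero_mul, sub_zero] at hAD
  have hD : A⁻¹ᵀ = D := by rw [transpose_nonsing_inv, inv_eq_right_inv hAD]
  have hADt : A * Dᵀ = 1 := by
    rw [← transpose_transpose A, ← transpose_mul, mul_eq_one_comm.1 hAD, transpose_one]
  have e : fromBlocks A B 0 D = diagInvTranspose A * fromBlocks 1 (Dᵀ * B) 0 1 := by
    simp [diagInvTranspose_apply, hD, fromBlocks_multiply, ← Matrix.mul_assoc, hADt]
  rw [e]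
  refine mul_mem (diagInvTranspose_mem (by simpa using isUnit_det_of_right_inverse hAD))
    (fromBlocks_one_symm_zero_one_mem ?_)
  rw [IsSymm, transpose_mul, transpose_transpose, hBD]

theorem fromBlocks_mem_of_isSymplectic_of_isUnit_det (h : IsSymplectic (fromBlocks A B C D))
    (hA : IsUnit A.det) : fromBlocks A B C D ∈ unitTriangularSubmonoid d := by
  obtain ⟨hAC, -, -⟩ := isSymplectic_fromBlocks_iff.1 h
  set X := C * A⁻¹ with hXdef
  have hX : X.IsSymm := by
    have hCt : Cᵀ = Aᵀ * X := by
      rw [hXdef, ← Matrix.mul_assoc, hAC, Matrix.mul_assoc, mul_nonsing_inv _ hA, Matrix.mul_one]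
    rw [IsSymm, hXdef, transpose_mul, transpose_nonsing_inv, hCt, ← Matrix.mul_assoc,
      nonsing_inv_mul _ (isUnit_det_transpose _ hA), Matrix.one_mul]
  have e : fromBlocks 1 0 (-X) 1 * fromBlocks A B C D = fromBlocks A B 0 (D - X * B) := by
    simp [fromBlocks_multiply, hXdef, Matrix.mul_assoc, nonsing_inv_mul _ hA, sub_eq_neg_add]
  have e' : fromBlocks A B C D = fromBlocks 1 0 X 1 * fromBlocks A B 0 (D - X * B) := by
    simp [fromBlocks_multiply, hXdef, Matrix.mul_assoc, nonsing_inv_mul _ hA]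
  rw [e']
  refine mul_mem (fromBlocks_one_zero_symm_one_mem hX) (fromBlocks_zero_mem_of_isSymplectic ?_)
  rw [← e]
  exact (isSymplectic_fromBlocks_one_zero_symm_one hX.neg).mul h

theorem fromBlocks_mem_of_isSymplectic (h : IsSymplectic (fromBlocks A B C D)) :
    fromBlocks A B C D ∈ unitTriangularSubmonoid d := by
  obtain ⟨hAC, hAD, -⟩ := isSymplectic_fromBlocks_iff.1 h
  have hker : ∀ x, A *ᵥ x = 0 → C *ᵥ x = 0 → x = 0 := fun x hAx hCx => by
    have hDA : Dᵀ * A - Bᵀ * C = 1 := by simpa using congrArg transpose hAD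
    simpa [sub_mulVec, ← mulVec_mulVec, hAx, hCx] using (congrArg (· *ᵥ x) hDA).symm
  obtain ⟨S, hS, hdet⟩ := exists_isSymm_isUnit_det_add_mul hAC hker
  have e : fromBlocks 1 S 0 1 * fromBlocks A B C D =
      fromBlocks (A + S * C) (B + S * D) C D := by
    simp [fromBlocks_multiply]
  have e' : fromBlocks A B C D =
      fromBlocks 1 (-S) 0 1 * fromBlocks (A + S * C) (B + S * D) C D := by
    simp [fromBlocks_multiply]
  rw [e']
  refine mul_mem (fromBlocks_one_symm_zero_one_mem hS.neg)
    (fromBlocks_mem_of_isSymplectic_of_isUnit_det ?_ hdet)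
  rw [← e]
  exact (isSymplectic_fromBlocks_one_symm_zero_one hS).mul h

end unitTriangularSubmonoid

theorem stmt15 (d : ℕ) (H : Matrix (Fin d ⊕ Fin d) (Fin d ⊕ Fin d) ℝ)
    (h : IsSymplectic H) :
    ∃ L : List (Matrix (Fin d ⊕ Fin d) (Fin d ⊕ Fin d) ℝ),
      (∀ M ∈ L, IsUnitTriangular M) ∧ L.prod = H := by
  rw [← fromBlocks_toBlocks H] at h ⊢
  exact Submonoid.exists_list_of_mem_closure
    (unitTriangularSubmonoid.fromBlocks_mem_of_isSymplectic h)
end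

section
/- If H ∈ ℝ^{2d×2d} is a symmetric positive definite symplectic matrix, then there exists a symmetric matrix S and a symmetric positive definite matrix P (both d×d) such that H = [[I,0],[S,I]] · [[P,0],[0,P^{-1}]] · [[I,S],[0,I]]. -/
open Matrix

/-!
Write `H = [[A, B], [Bᵀ, D]]`. For symmetric `H` the condition `Hᵀ J H = J` reduces to
`A Bᵀ = B A` and `D A = Bᵀ Bᵀ + 1`, and `A` is positive definite as a principal block of `H`.
Take `P = A` and `S = Bᵀ A⁻¹`: the first relation makes `S` symmetric, and the product
`[[I, 0], [S, I]] [[P, 0], [0, P⁻¹]] [[I, S], [0, I]] = [[P, P S], [S P, S P S + P⁻¹]]`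
has blocks `A`, `B`, `Bᵀ`, `D` by the two relations.
-/

namespace Matrix

variable {m n α : Type*}

theorem PosDef.toBlocks₁₁ {R : Type*} [CommRing R] [PartialOrder R] [StarRing R]
    {M : Matrix (m ⊕ n) (m ⊕ n) R} (hM : M.PosDef) : M.toBlocks₁₁.PosDef :=
  hM.submatrix Sum.inl_injective

theorem fromBlocks_lower_mul_diagonal_mul_upper [Fintype m] [Fintype n] [DecidableEq m]
    [DecidableEq n] [Semiring α] (S : Matrix n m α) (T : Matrix m n α) (P : Matrix m m α)
    (Q : Matrix n n α) :
    fromBlocks 1 0 S 1 * fromBlocks P 0 0 Q * fromBlocks 1 T 0 1 =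
      fromBlocks P (P * T) (S * P) (S * P * T + Q) := by
  simp only [fromBlocks_multiply, Matrix.mul_zero, Matrix.zero_mul, Matrix.mul_one,
    Matrix.one_mul, add_zero, zero_add]

variable [Fintype n] [DecidableEq n] [CommRing α] {A B D : Matrix n n α}

theorem nonsing_inv_mul_eq_transpose_mul_nonsing_inv (hA : IsUnit A.det)
    (hAB : A * Bᵀ = B * A) : A⁻¹ * B = Bᵀ * A⁻¹ :=
  calc A⁻¹ * B = A⁻¹ * (B * A) * A⁻¹ := by
        rw [Matrix.mul_assoc, mul_nonsing_inv_cancel_right _ _ hA]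
    _ = Bᵀ * A⁻¹ := by rw [← hAB, nonsing_inv_mul_cancel_left _ _ hA]

theorem isSymm_transpose_mul_nonsing_inv (hA : IsUnit A.det) (hAsymm : Aᵀ = A)
    (hAB : A * Bᵀ = B * A) : (Bᵀ * A⁻¹).IsSymm := by
  rw [IsSymm, transpose_mul, transpose_nonsing_inv, hAsymm, transpose_transpose,
    nonsing_inv_mul_eq_transpose_mul_nonsing_inv hA hAB]

theorem fromBlocks_eq_lower_mul_diagonal_mul_upper (hA : IsUnit A.det) (hAB : A * Bᵀ = B * A)
    (hDA : D * A = Bᵀ * Bᵀ + 1) :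
    fromBlocks A B Bᵀ D = fromBlocks 1 0 (Bᵀ * A⁻¹) 1 * fromBlocks A 0 0 A⁻¹ *
      fromBlocks 1 (Bᵀ * A⁻¹) 0 1 := by
  have hD : D = (Bᵀ * Bᵀ + 1) * A⁻¹ := by rw [← hDA, mul_nonsing_inv_cancel_right _ _ hA]
  rw [fromBlocks_lower_mul_diagonal_mul_upper, nonsing_inv_mul_cancel_right _ _ hA,
    ← Matrix.mul_assoc, hAB, mul_nonsing_inv_cancel_right _ _ hA, hD, Matrix.add_mul,
    Matrix.one_mul, Matrix.mul_assoc]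

end Matrix

theorem fromBlocks_transpose_mul_Jmat_mul {d : ℕ} (A B C D : Matrix (Fin d) (Fin d) ℝ) :
    (fromBlocks A B C D)ᵀ * Jmat d * fromBlocks A B C D =
      fromBlocks (Aᵀ * C - Cᵀ * A) (Aᵀ * D - Cᵀ * B) (Bᵀ * C - Dᵀ * A) (Bᵀ * D - Dᵀ * B) := by
  simp only [Jmat, fromBlocks_transpose, fromBlocks_multiply, Matrix.mul_zero, Matrix.mul_one,
    Matrix.mul_neg, Matrix.neg_mul, add_zero, zero_add, sub_eq_neg_add]

theorem IsSymplectic.block_relations_of_symm {d : ℕ} {A B D : Matrix (Fin d) (Fin d) ℝ}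
    (h : IsSymplectic (fromBlocks A B Bᵀ D)) (hA : Aᵀ = A) (hD : Dᵀ = D) :
    A * Bᵀ = B * A ∧ D * A = Bᵀ * Bᵀ + 1 := by
  rw [IsSymplectic, fromBlocks_transpose_mul_Jmat_mul, Jmat, fromBlocks_inj] at h
  obtain ⟨h₁₁, -, h₂₁, -⟩ := h
  rw [transpose_transpose, hA] at h₁₁
  rw [hD, ← neg_sub, neg_inj] at h₂₁
  exact ⟨sub_eq_zero.mp h₁₁, sub_eq_iff_eq_add'.mp h₂₁⟩

theorem stmt18 (d : ℕ) (H : Matrix (Fin d ⊕ Fin d) (Fin d ⊕ Fin d) ℝ)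
    (hpd : H.PosDef) (h : IsSymplectic H) :
    ∃ S P : Matrix (Fin d) (Fin d) ℝ,
      Sᵀ = S ∧ P.PosDef ∧
      H = Matrix.fromBlocks 1 0 S 1 * Matrix.fromBlocks P 0 0 P⁻¹ *
          Matrix.fromBlocks 1 S 0 1 := by
  obtain ⟨A, B, C, D, rfl⟩ : ∃ A B C D, H = fromBlocks A B C D :=
    ⟨_, _, _, _, (fromBlocks_toBlocks H).symm⟩
  have hA : A.PosDef := hpd.toBlocks₁₁
  have hsymm : (fromBlocks A B C D)ᵀ = fromBlocks A B C D := hpd.isHermitian.eq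
  rw [fromBlocks_transpose, fromBlocks_inj] at hsymm
  obtain ⟨hAsymm, -, rfl, hDsymm⟩ := hsymm
  obtain ⟨hAB, hDA⟩ := h.block_relations_of_symm hAsymm hDsymm
  have hdet : IsUnit A.det := hA.isUnit.map detMonoidHom
  exact ⟨Bᵀ * A⁻¹, A, isSymm_transpose_mul_nonsing_inv hdet hAsymm hAB, hA,
    fromBlocks_eq_lower_mul_diagonal_mul_upper hdet hAB hDA⟩
end

section
/- The diagonal matrix G = [[2I, 0], [0, (1/2)I]] ∈ ℝ^{2d×2d} (which is symplectic, symmetric, and positive definite) cannot be written as a product [[I,S₃],[0,I]] · [[I,0],[S₂,I]] · [[I,S₁],[0,I]] for any symmetric matrices S₁, S₂, S₃ ∈ ℝ^{d×d}. -/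
open Matrix

/-
The lower-left block of the product is the middle factor's `S₂`, so a block-diagonal product
forces `S₂ = 0`, and then its lower-right block `S₂ S₁ + I` is `I`; for `G` it is `(1/2) I`.
-/

namespace Matrix

variable {m n R : Type*} [Fintype m] [Fintype n] [DecidableEq m] [DecidableEq n] [Ring R]

theorem fromBlocks_upper_mul_lower_mul_upper (A C : Matrix m n R) (B : Matrix n m R) :
    fromBlocks 1 C 0 1 * fromBlocks 1 0 B 1 * fromBlocks 1 A 0 1 =
      fromBlocks (1 + C * B) ((1 + C * B) * A + C) B (B * A + 1) := by
  simp only [fromBlocks_multiply, Matrix.mul_one, Matrix.one_mul, Matrix.mul_zero, add_zero,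
    zero_add]

theorem eq_one_of_fromBlocks_upper_mul_lower_mul_upper_eq {A C : Matrix m n R}
    {B : Matrix n m R} {P : Matrix m m R} {Q : Matrix n n R}
    (h : fromBlocks 1 C 0 1 * fromBlocks 1 0 B 1 * fromBlocks 1 A 0 1 = fromBlocks P 0 0 Q) :
    Q = 1 := by
  rw [fromBlocks_upper_mul_lower_mul_upper, fromBlocks_inj] at h
  obtain ⟨-, -, hB, hQ⟩ := h
  rw [← hQ, hB, Matrix.zero_mul, zero_add]

end Matrix

theorem stmt19 (d : ℕ) (hd : 1 ≤ d) :
    ¬ ∃ S₁ S₂ S₃ : Matrix (Fin d) (Fin d) ℝ,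
      S₁ᵀ = S₁ ∧ S₂ᵀ = S₂ ∧ S₃ᵀ = S₃ ∧
      Matrix.fromBlocks 1 S₃ 0 1 * Matrix.fromBlocks 1 0 S₂ 1 *
          Matrix.fromBlocks 1 S₁ 0 1 =
        Matrix.fromBlocks ((2 : ℝ) • 1) 0 0 (((1 : ℝ)/2) • 1) := by
  rintro ⟨S₁, S₂, S₃, -, -, -, h⟩
  have hdiag := congrFun₂ (eq_one_of_fromBlocks_upper_mul_lower_mul_upper_eq h) ⟨0, hd⟩ ⟨0, hd⟩
  norm_num at hdiag
end
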